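/- arXiv:1402.6773 — 3 statements merged into one kernel-verified Lean document; each statement's English description precedes it below -/
import Mathlib

section
/- Let ρ: ℝ≥0 → ℝ≥0 be a nondecreasing concave function with ρ(0) = 0. Then for every real r > 1, the function x ↦ ρ(x^{1/r})^r is also nondecreasing and concave on ℝ≥0. -/
open Set

/-!
A nondecreasing concave `ρ` with `ρ 0 = 0` is touched from above at every point `w > 0` by a
supporting line `c t + d` with `c, d ≥ 0`. The transform `ρ ↦ (ρ (x ^ (1 / r))) ^ r` is monotone
and sends such a line to `(c x ^ (1 / r) + d) ^ r`, which is concave by Minkowski's inequality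
(with weights). So at every positive point the transform of `ρ` is touched from above by a concave
function, which forces it to be concave.
-/

lemma ConvexOn.exists_add_mul_sub_le {S : Set ℝ} {f : ℝ → ℝ} {x : ℝ} (hf : ConvexOn ℝ S f)
    (hx : x ∈ interior S) : ∃ m, ∀ y ∈ S, f x + m * (y - x) ≤ f y := by
  refine ⟨derivWithin f (Ioi x) x, fun y hy => ?_⟩
  rcases lt_trichotomy y x with hyx | rfl | hxy
  · have h := (hf.slope_le_leftDeriv_of_mem_interior hy hx hyx).trans
      (hf.leftDeriv_le_rightDeriv_of_mem_interior hx)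
    rw [slope_def_field, div_le_iff₀ (sub_pos.2 hyx)] at h
    linarith
  · simp
  · have h := hf.rightDeriv_le_slope_of_mem_interior hx hy hxy
    rw [slope_def_field, le_div_iff₀ (sub_pos.2 hxy)] at h
    linarith

lemma ConcaveOn.exists_le_add_mul_sub {S : Set ℝ} {f : ℝ → ℝ} {x : ℝ} (hf : ConcaveOn ℝ S f)
    (hx : x ∈ interior S) : ∃ m, ∀ y ∈ S, f y ≤ f x + m * (y - x) := by
  obtain ⟨m, hm⟩ := hf.neg.exists_add_mul_sub_le hx
  refine ⟨-m, fun y hy => ?_⟩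
  have h := hm y hy
  simp only [Pi.neg_apply] at h
  linarith

theorem Real.weighted_Lp_add_le_of_nonneg {ι : Type*} (s : Finset ι) {w f g : ι → ℝ} {p : ℝ}
    (hp : 1 ≤ p) (hw : ∀ i ∈ s, 0 ≤ w i) (hf : ∀ i ∈ s, 0 ≤ f i) (hg : ∀ i ∈ s, 0 ≤ g i) :
    (∑ i ∈ s, w i * (f i + g i) ^ p) ^ (1 / p) ≤
      (∑ i ∈ s, w i * f i ^ p) ^ (1 / p) + (∑ i ∈ s, w i * g i ^ p) ^ (1 / p) := by
  have hweight : ∀ i ∈ s, ∀ t, 0 ≤ t → (w i ^ (1 / p) * t) ^ p = w i * t ^ p := fun i hi t ht => by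
    rw [Real.mul_rpow (Real.rpow_nonneg (hw i hi) _) ht, ← Real.rpow_mul (hw i hi),
      one_div_mul_cancel (by positivity), Real.rpow_one]
  have h := Real.Lp_add_le_of_nonneg (s := s) (f := fun i => w i ^ (1 / p) * f i)
    (g := fun i => w i ^ (1 / p) * g i) hp
    (fun i hi => mul_nonneg (Real.rpow_nonneg (hw i hi) _) (hf i hi))
    (fun i hi => mul_nonneg (Real.rpow_nonneg (hw i hi) _) (hg i hi))
  simp only [← mul_add] at h
  rwa [Finset.sum_congr rfl fun i hi => hweight i hi _ (add_nonneg (hf i hi) (hg i hi)),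
    Finset.sum_congr rfl fun i hi => hweight i hi _ (hf i hi),
    Finset.sum_congr rfl fun i hi => hweight i hi _ (hg i hi)] at h

lemma concaveOn_rpow_mul_rpow_inv_add {r c d : ℝ} (hr : 1 ≤ r) (hc : 0 ≤ c) (hd : 0 ≤ d) :
    ConcaveOn ℝ (Ici 0) fun x : ℝ => (c * x ^ (1 / r) + d) ^ r := by
  refine ⟨convex_Ici 0, fun x (hx : 0 ≤ x) y (hy : 0 ≤ y) a b ha hb hab => ?_⟩
  have hr0 : r ≠ 0 := by positivity
  have hpow : ∀ t, 0 ≤ t → (c * t ^ (1 / r)) ^ r = c ^ r * t := fun t ht => by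
    rw [Real.mul_rpow hc (by positivity), one_div, Real.rpow_inv_rpow ht hr0]
  have h := Real.weighted_Lp_add_le_of_nonneg Finset.univ (w := ![a, b])
    (f := ![c * x ^ (1 / r), c * y ^ (1 / r)]) (g := ![d, d]) hr
    (by simp [Fin.forall_fin_two, ha, hb]) (fun i _ => by fin_cases i <;> simp <;> positivity)
    (by simp [Fin.forall_fin_two, hd])
  simp only [Fin.sum_univ_two, Matrix.cons_val_zero, Matrix.cons_val_one] at h
  rw [hpow x hx, hpow y hy, ← add_mul, hab, one_mul, one_div, Real.rpow_rpow_inv hd hr0,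
    show a * (c ^ r * x) + b * (c ^ r * y) = c ^ r * (a * x + b * y) by ring,
    Real.mul_rpow (by positivity) (by positivity), Real.rpow_rpow_inv hc hr0,
    Real.rpow_inv_le_iff_of_pos (by positivity) (by positivity) (by positivity)] at h
  simpa only [smul_eq_mul, one_div] using h

section

variable {ρ : ℝ → ℝ}

lemma MonotoneOn.nonneg_of_map_zero (hmono : MonotoneOn ρ (Ici 0)) (h0 : ρ 0 = 0) {t : ℝ}
    (ht : 0 ≤ t) : 0 ≤ ρ t :=
  h0 ▸ hmono self_mem_Ici ht ht

lemma MonotoneOn.exists_nonneg_affine_majorant_of_concaveOn (hmono : MonotoneOn ρ (Ici 0))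
    (hconc : ConcaveOn ℝ (Ici 0) ρ) (h0 : ρ 0 = 0) {w : ℝ} (hw : 0 < w) :
    ∃ c d : ℝ, 0 ≤ c ∧ 0 ≤ d ∧ (∀ t, 0 ≤ t → ρ t ≤ c * t + d) ∧ ρ w = c * w + d := by
  obtain ⟨m, hm⟩ := hconc.exists_le_add_mul_sub (x := w) (by rwa [interior_Ici])
  refine ⟨m, ρ w - m * w, ?_, ?_, fun t ht => ?_, by ring⟩
  · have h1 := hm (w + 1) (by simp; linarith)
    have h2 := hmono hw.le (show (0 : ℝ) ≤ w + 1 by linarith) (by linarith)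
    linarith
  · have := hm 0 self_mem_Ici
    rw [h0] at this
    linarith
  · have := hm t ht
    linarith

variable {r : ℝ}

lemma MonotoneOn.rpow_comp_rpow_inv (hmono : MonotoneOn ρ (Ici 0)) (h0 : ρ 0 = 0) (hr : 0 < r) :
    MonotoneOn (fun x : ℝ => ρ (x ^ (1 / r)) ^ r) (Ici 0) :=
  fun x (hx : 0 ≤ x) y (hy : 0 ≤ y) hxy =>
  Real.rpow_le_rpow (hmono.nonneg_of_map_zero h0 (by positivity))
    (hmono (Real.rpow_nonneg hx _) (Real.rpow_nonneg hy _)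
      (Real.rpow_le_rpow hx hxy (by positivity))) hr.le

lemma ConcaveOn.rpow_comp_rpow_inv (hconc : ConcaveOn ℝ (Ici 0) ρ) (hmono : MonotoneOn ρ (Ici 0))
    (h0 : ρ 0 = 0) (hr : 1 ≤ r) :
    ConcaveOn ℝ (Ici 0) (fun x : ℝ => ρ (x ^ (1 / r)) ^ r) := by
  refine concaveOn_iff_forall_pos.2
    ⟨convex_Ici 0, fun x (hx : 0 ≤ x) y (hy : 0 ≤ y) a b ha hb hab => ?_⟩
  simp only [smul_eq_mul]
  rcases (show 0 ≤ a * x + b * y by positivity).eq_or_lt with hz | hz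
  · obtain ⟨rfl, rfl⟩ : x = 0 ∧ y = 0 := by constructor <;> nlinarith
    rw [← add_mul, hab, one_mul, mul_zero, mul_zero, add_zero]
  obtain ⟨c, d, hc, hd, hle, heq⟩ :=
    hmono.exists_nonneg_affine_majorant_of_concaveOn hconc h0 (Real.rpow_pos_of_pos hz (1 / r))
  have hmaj : ∀ t, 0 ≤ t → ρ (t ^ (1 / r)) ^ r ≤ (c * t ^ (1 / r) + d) ^ r := fun t ht =>
    Real.rpow_le_rpow (hmono.nonneg_of_map_zero h0 (by positivity)) (hle _ (by positivity))
      (by positivity)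
  calc a * ρ (x ^ (1 / r)) ^ r + b * ρ (y ^ (1 / r)) ^ r
      ≤ a * (c * x ^ (1 / r) + d) ^ r + b * (c * y ^ (1 / r) + d) ^ r := by
        gcongr a * ?_ + b * ?_
        exacts [hmaj x hx, hmaj y hy]
    _ ≤ (c * (a * x + b * y) ^ (1 / r) + d) ^ r :=
        (concaveOn_rpow_mul_rpow_inv_add hr hc hd).2 hx hy ha.le hb.le hab
    _ = ρ ((a * x + b * y) ^ (1 / r)) ^ r := by rw [heq]

end

theorem stmt1_general (ρ : ℝ → ℝ)
    (hmono : MonotoneOn ρ (Set.Ici 0))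
    (hconc : ConcaveOn ℝ (Set.Ici 0) ρ) (h0 : ρ 0 = 0)
    (r : ℝ) (hr : 1 < r) :
    MonotoneOn (fun x : ℝ => (ρ (x ^ (1 / r))) ^ r) (Set.Ici 0) ∧
    ConcaveOn ℝ (Set.Ici 0) (fun x : ℝ => (ρ (x ^ (1 / r))) ^ r) :=
  ⟨hmono.rpow_comp_rpow_inv h0 (by linarith), hconc.rpow_comp_rpow_inv hmono h0 hr.le⟩

theorem stmt1 (ρ : ℝ → ℝ) (hnn : ∀ x ≥ 0, 0 ≤ ρ x)
    (hmono : MonotoneOn ρ (Set.Ici 0))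
    (hconc : ConcaveOn ℝ (Set.Ici 0) ρ) (h0 : ρ 0 = 0)
    (r : ℝ) (hr : 1 < r) :
    MonotoneOn (fun x : ℝ => (ρ (x ^ (1 / r))) ^ r) (Set.Ici 0) ∧
    ConcaveOn ℝ (Set.Ici 0) (fun x : ℝ => (ρ (x ^ (1 / r))) ^ r) :=
  stmt1_general ρ hmono hconc h0 r hr
end

section
/- Let ρ: ℝ≥0 → ℝ≥0 be a nondecreasing concave function with ρ(0) = 0, ρ(u) > 0 for u > 0, and ∫_{0^+} du/ρ(u) = +∞ (i.e., for some a > 0, the integral of 1/ρ(u) over (0, a] diverges). Then for every real r with 0 < r < 1, ∫_{0^+} du / ρ(u^{1/r})^r = +∞. -/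
/-!
Substituting `u = v ^ r` turns `∫ du / ρ(u ^ (1/r)) ^ r` over `(0, a ^ r]` into
`r ∫ v ^ (r - 1) / ρ(v) ^ r dv = r ∫ (ρ(v) / v) ^ (1 - r) / ρ(v) dv` over `(0, a]`.
Concavity and `ρ 0 = 0` make `ρ(v) / v` nonincreasing, so `ρ(v) / v ≥ ρ(a) / a` there and the
new integrand dominates a constant multiple of `1 / ρ(v)`, whose integral diverges.
-/

open MeasureTheory Set Real

theorem Real.image_rpow_Ioc {p a : ℝ} (hp : 0 < p) (ha : 0 ≤ a) :
    (fun x : ℝ => x ^ p) '' Ioc 0 a = Ioc 0 (a ^ p) := by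
  ext u
  constructor
  · rintro ⟨x, ⟨hx0, hxa⟩, rfl⟩
    exact ⟨rpow_pos_of_pos hx0 p, rpow_le_rpow hx0.le hxa hp.le⟩
  · rintro ⟨hu0, hua⟩
    refine ⟨u ^ p⁻¹, ⟨rpow_pos_of_pos hu0 _, ?_⟩, rpow_inv_rpow hu0.le hp.ne'⟩
    calc u ^ p⁻¹ ≤ (a ^ p) ^ p⁻¹ := rpow_le_rpow hu0.le hua (inv_nonneg.2 hp.le)
      _ = a := rpow_rpow_inv ha hp.ne'

theorem integrableOn_Ioc_comp_rpow_iff {E : Type*} [NormedAddCommGroup E] [NormedSpace ℝ E]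
    (f : ℝ → E) {p a : ℝ} (hp : 0 < p) (ha : 0 ≤ a) :
    IntegrableOn (fun x => x ^ (p - 1) • f (x ^ p)) (Ioc 0 a) ↔
      IntegrableOn f (Ioc 0 (a ^ p)) := by
  have hderiv : ∀ x ∈ Ioc (0 : ℝ) a,
      HasDerivWithinAt (fun t : ℝ => t ^ p) (p * x ^ (p - 1)) (Ioc 0 a) x :=
    fun x hx => (hasDerivAt_rpow_const (Or.inl hx.1.ne')).hasDerivWithinAt
  have hinj : InjOn (fun t : ℝ => t ^ p) (Ioc 0 a) :=
    ((strictMonoOn_rpow_Ici_of_exponent_pos hp).mono fun _ hx => hx.1.le).injOn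
  rw [← image_rpow_Ioc hp ha,
    integrableOn_image_iff_integrableOn_abs_deriv_smul measurableSet_Ioc hderiv hinj]
  refine (integrable_smul_iff hp.ne' _).symm.trans
    (integrableOn_congr_fun (fun x hx => ?_) measurableSet_Ioc)
  simp only [abs_mul, abs_of_pos hp, abs_of_nonneg (rpow_nonneg hx.1.le _), mul_smul,
    Pi.smul_apply]

theorem ConcaveOn.div_le_div_of_map_zero {f : ℝ → ℝ} (hf : ConcaveOn ℝ (Ici 0) f)
    (h0 : f 0 = 0) {x y : ℝ} (hx : 0 < x) (hxy : x ≤ y) : f y / y ≤ f x / x := by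
  have := hf.antitoneOn_slope_gt self_mem_Ici ⟨hx.le, hx⟩
    ⟨hx.le.trans hxy, hx.trans_le hxy⟩ hxy
  simpa only [slope_def_field, h0, sub_zero] using this

theorem inv_le_rpow_mul_rpow_sub_one_mul_inv_rpow {x y K r : ℝ} (hx : 0 < x) (hy : 0 < y)
    (hxy : x ≤ K * y) (hr : r ≤ 1) :
    y⁻¹ ≤ K ^ (1 - r) * (x ^ (r - 1) * (y ^ r)⁻¹) := by
  have hK : 0 ≤ K := nonneg_of_mul_nonneg_left (hx.le.trans hxy) hy
  have hpow : x ^ (1 - r) ≤ K ^ (1 - r) * y ^ (1 - r) := by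
    rw [← mul_rpow hK hy.le]
    exact rpow_le_rpow hx.le hxy (sub_nonneg.2 hr)
  calc y⁻¹ = (y ^ (1 - r))⁻¹ * (y ^ r)⁻¹ := by
        rw [← mul_inv, ← rpow_add hy, sub_add_cancel, rpow_one]
    _ ≤ K ^ (1 - r) * (x ^ (1 - r))⁻¹ * (y ^ r)⁻¹ := by
        gcongr
        rw [le_mul_inv_iff₀ (by positivity), inv_mul_le_iff₀ (by positivity)]
        rwa [mul_comm] at hpow
    _ = K ^ (1 - r) * (x ^ (r - 1) * (y ^ r)⁻¹) := by
        rw [← rpow_neg hx.le, neg_sub, mul_assoc]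

theorem stmt2_general (ρ : ℝ → ℝ)
    (hconc : ConcaveOn ℝ (Set.Ici 0) ρ) (h0 : ρ 0 = 0)
    (hpos : ∀ u > (0 : ℝ), 0 < ρ u)
    (hdiv : ∃ a > (0 : ℝ),
      ¬ MeasureTheory.IntegrableOn (fun u => 1 / ρ u) (Set.Ioc 0 a))
    (r : ℝ) (hr0 : 0 < r) (hr1 : r < 1) :
    ∃ b > (0 : ℝ),
      ¬ MeasureTheory.IntegrableOn
        (fun u => 1 / (ρ (u ^ (1 / r))) ^ r) (Set.Ioc 0 b) := by
  obtain ⟨a, ha, hdiv⟩ := hdiv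
  refine ⟨a ^ r, rpow_pos_of_pos ha r, fun hint => hdiv ?_⟩
  rw [← integrableOn_Ioc_comp_rpow_iff _ hr0 ha.le] at hint
  have hmeas : AEStronglyMeasurable (fun u => 1 / ρ u) (volume.restrict (Ioc 0 a)) := by
    have hcont : ContinuousOn ρ (Ioi 0) :=
      interior_Ici (a := (0 : ℝ)) ▸ hconc.continuousOn_interior
    refine ContinuousOn.aestronglyMeasurable ?_ measurableSet_Ioc
    exact continuousOn_const.div (hcont.mono Ioc_subset_Ioi_self) fun v hv => (hpos v hv.1).ne'
  refine (hint.const_mul ((a / ρ a) ^ (1 - r))).mono' hmeas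
    ((ae_restrict_iff' measurableSet_Ioc).2 (ae_of_all _ fun v hva => ?_))
  have hv : 0 < v := hva.1
  have hρv : 0 < ρ v := hpos v hv
  have hslope : v ≤ a / ρ a * ρ v := by
    have := hconc.div_le_div_of_map_zero h0 hv hva.2
    rw [div_le_div_iff₀ ha hv] at this
    rw [div_mul_eq_mul_div, le_div_iff₀ (hpos a ha)]
    linarith
  rw [one_div r, rpow_rpow_inv hv.le hr0.ne', norm_of_nonneg (by positivity), smul_eq_mul]
  simpa only [one_div] using inv_le_rpow_mul_rpow_sub_one_mul_inv_rpow hv hρv hslope hr1.le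

theorem stmt2 (ρ : ℝ → ℝ) (hnn : ∀ x ≥ 0, 0 ≤ ρ x)
    (hmono : MonotoneOn ρ (Set.Ici 0))
    (hconc : ConcaveOn ℝ (Set.Ici 0) ρ) (h0 : ρ 0 = 0)
    (hpos : ∀ u > (0 : ℝ), 0 < ρ u)
    (hdiv : ∃ a > (0 : ℝ),
      ¬ MeasureTheory.IntegrableOn (fun u => 1 / ρ u) (Set.Ioc 0 a))
    (r : ℝ) (hr0 : 0 < r) (hr1 : r < 1) :
    ∃ b > (0 : ℝ),
      ¬ MeasureTheory.IntegrableOn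
        (fun u => 1 / (ρ (u ^ (1 / r))) ^ r) (Set.Ioc 0 b) :=
  stmt2_general ρ hconc h0 hpos hdiv r hr0 hr1
end

section
/- Monotonicity in p of the divergence condition: let κ: ℝ≥0 → ℝ≥0 be nondecreasing concave with κ(0)=0 and κ(u)>0 for u>0, and let 1 < p < q. If ∫_{0^+} du/κ(u^{1/q})^q = +∞, then ∫_{0^+} du/κ(u^{1/p})^p = +∞. Equivalently, if ∫_{0^+} u^{q-1}/κ(u)^q du = +∞ then ∫_{0^+} u^{p-1}/κ(u)^p du = +∞. -/
/-!
Substituting `u = v ^ r` turns `∫_{0⁺} du / κ(u^{1/r})^r` into `r ∫_{0⁺} v^{r-1} / κ(v)^r dv`.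
Concavity and `κ 0 = 0` make `κ v / v` nonincreasing, so on `(0, A]` we have
`v / κ v ≤ A / κ A`, hence `v^{q-1} / κ(v)^q = (v / κ v)^{q-p} · v^{p-1} / κ(v)^p` is dominated by
a constant multiple of `v^{p-1} / κ(v)^p`: convergence for `p` forces convergence for `q`.
-/

open MeasureTheory Set Real

lemma ConcaveOn.antitoneOn_div_self {κ : ℝ → ℝ} (hconc : ConcaveOn ℝ (Ici 0) κ) (h0 : κ 0 = 0) :
    AntitoneOn (fun v => κ v / v) (Ioi 0) := by
  intro x hx y hy hxy
  have hslope := hconc.slope_anti (x := 0) self_mem_Ici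
    ⟨mem_Ici.2 hx.le, hx.ne'⟩ ⟨mem_Ici.2 hy.le, hy.ne'⟩ hxy
  simpa only [slope_def_field, h0, sub_zero] using hslope

lemma image_rpow_Ioc {A r : ℝ} (hA : 0 ≤ A) (hr : 0 < r) :
    (fun v : ℝ => v ^ r) '' Ioc 0 A = Ioc 0 (A ^ r) := by
  ext u
  constructor
  · rintro ⟨v, ⟨hv0, hvA⟩, rfl⟩
    exact ⟨rpow_pos_of_pos hv0 r, rpow_le_rpow hv0.le hvA hr.le⟩
  · rintro ⟨hu0, huA⟩
    refine ⟨u ^ r⁻¹, ⟨rpow_pos_of_pos hu0 _, ?_⟩, rpow_inv_rpow hu0.le hr.ne'⟩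
    calc u ^ r⁻¹ ≤ (A ^ r) ^ r⁻¹ := rpow_le_rpow hu0.le huA (by positivity)
      _ = A := rpow_rpow_inv hA hr.ne'

lemma integrableOn_Ioc_comp_rpow_iff_s19 {E : Type*} [NormedAddCommGroup E] [NormedSpace ℝ E]
    (g : ℝ → E) {A r : ℝ} (hA : 0 ≤ A) (hr : 0 < r) :
    IntegrableOn g (Ioc 0 (A ^ r)) ↔ IntegrableOn (fun v => v ^ (r - 1) • g (v ^ r)) (Ioc 0 A) := by
  have hderiv : ∀ v ∈ Ioc (0 : ℝ) A,
      HasDerivWithinAt (fun v : ℝ => v ^ r) (r * v ^ (r - 1)) (Ioc 0 A) v :=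
    fun v hv => (hasDerivAt_rpow_const (Or.inl hv.1.ne')).hasDerivWithinAt
  have hmono : StrictMonoOn (fun v : ℝ => v ^ r) (Ioc 0 A) :=
    fun x hx _ _ hxy => rpow_lt_rpow hx.1.le hxy hr
  rw [← image_rpow_Ioc hA hr,
    integrableOn_image_iff_integrableOn_abs_deriv_smul measurableSet_Ioc hderiv hmono.injOn g]
  refine (integrableOn_congr_fun (fun v hv => ?_) measurableSet_Ioc).trans
    (integrable_smul_iff hr.ne' _)
  rw [Pi.smul_apply, smul_smul, abs_mul, abs_of_pos hr, abs_of_nonneg (rpow_nonneg hv.1.le _)]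

lemma integrableOn_one_div_comp_rpow_iff (κ : ℝ → ℝ) {A r : ℝ} (hA : 0 ≤ A) (hr : 0 < r) :
    IntegrableOn (fun u => 1 / κ (u ^ (1 / r)) ^ r) (Ioc 0 (A ^ r)) ↔
      IntegrableOn (fun v => v ^ (r - 1) / κ v ^ r) (Ioc 0 A) := by
  rw [integrableOn_Ioc_comp_rpow_iff_s19 _ hA hr]
  refine integrableOn_congr_fun (fun v hv => ?_) measurableSet_Ioc
  rw [one_div r, rpow_rpow_inv hv.1.le hr.ne', smul_eq_mul, mul_one_div]

lemma IntegrableOn.rpow_sub_one_div_rpow_of_le {κ : ℝ → ℝ} (hconc : ConcaveOn ℝ (Ici 0) κ)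
    (h0 : κ 0 = 0) (hpos : ∀ u > (0 : ℝ), 0 < κ u) {p q A : ℝ} (hpq : p ≤ q) (hA : 0 < A)
    (h : IntegrableOn (fun v => v ^ (p - 1) / κ v ^ p) (Ioc 0 A)) :
    IntegrableOn (fun v => v ^ (q - 1) / κ v ^ q) (Ioc 0 A) := by
  have hκcont : ContinuousOn κ (Ioc 0 A) :=
    hconc.continuousOn_interior.mono (by simp [Ioc_subset_Ioi_self])
  have hcont : ContinuousOn (fun v => v ^ (q - 1) / κ v ^ q) (Ioc 0 A) :=
    (continuousOn_id.rpow_const fun v hv => Or.inl hv.1.ne').div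
      (hκcont.rpow_const fun v hv => Or.inl (hpos v hv.1).ne')
      fun v hv => (rpow_pos_of_pos (hpos v hv.1) q).ne'
  refine (h.const_mul ((A / κ A) ^ (q - p))).mono'
    (hcont.aestronglyMeasurable measurableSet_Ioc) ?_
  filter_upwards [ae_restrict_mem measurableSet_Ioc] with v ⟨hv, hvA⟩
  have hκv := hpos v hv
  have hratio : v / κ v ≤ A / κ A := by
    rw [← inv_div, ← inv_div (κ A)]
    exact inv_anti₀ (div_pos (hpos A hA) hA) (hconc.antitoneOn_div_self h0 hv hA hvA)
  have hsplit : v ^ (q - 1) / κ v ^ q = (v / κ v) ^ (q - p) * (v ^ (p - 1) / κ v ^ p) := by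
    rw [div_rpow hv.le hκv.le, div_mul_div_comm, ← rpow_add hv, ← rpow_add hκv]
    ring_nf
  rw [Real.norm_eq_abs, abs_of_nonneg (by positivity), hsplit]
  gcongr

theorem stmt19_general (κ : ℝ → ℝ)
    (hconc : ConcaveOn ℝ (Set.Ici 0) κ)
    (h0 : κ 0 = 0) (hpos : ∀ u > (0 : ℝ), 0 < κ u)
    (p q : ℝ) (hp : 1 < p) (hpq : p < q)
    (hdiv : ∃ a > (0 : ℝ),
      ¬ MeasureTheory.IntegrableOn
        (fun u => 1 / (κ (u ^ (1 / q))) ^ q) (Set.Ioc 0 a)) :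
    ∃ b > (0 : ℝ),
      ¬ MeasureTheory.IntegrableOn
        (fun u => 1 / (κ (u ^ (1 / p))) ^ p) (Set.Ioc 0 b) := by
  obtain ⟨a, ha, hna⟩ := hdiv
  have hq : 0 < q := by linarith
  have hA : 0 < a ^ q⁻¹ := by positivity
  refine ⟨(a ^ q⁻¹) ^ p, by positivity, fun hint => hna ?_⟩
  rw [integrableOn_one_div_comp_rpow_iff κ hA.le (by linarith)] at hint
  rw [← rpow_inv_rpow ha.le hq.ne', integrableOn_one_div_comp_rpow_iff κ hA.le hq]
  exact IntegrableOn.rpow_sub_one_div_rpow_of_le hconc h0 hpos hpq.le hA hint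

theorem stmt19 (κ : ℝ → ℝ) (hnn : ∀ u ≥ 0, 0 ≤ κ u)
    (hmono : MonotoneOn κ (Set.Ici 0)) (hconc : ConcaveOn ℝ (Set.Ici 0) κ)
    (h0 : κ 0 = 0) (hpos : ∀ u > (0 : ℝ), 0 < κ u)
    (p q : ℝ) (hp : 1 < p) (hpq : p < q)
    (hdiv : ∃ a > (0 : ℝ),
      ¬ MeasureTheory.IntegrableOn
        (fun u => 1 / (κ (u ^ (1 / q))) ^ q) (Set.Ioc 0 a)) :
    ∃ b > (0 : ℝ),
      ¬ MeasureTheory.IntegrableOn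
        (fun u => 1 / (κ (u ^ (1 / p))) ^ p) (Set.Ioc 0 b) :=
  stmt19_general κ hconc h0 hpos p q hp hpq hdiv
end
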